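/- Let F be an antisymmetric real 4×4 matrix and let T := F·η·Fᵀ − (1/4)·tr(η·F·η·Fᵀ)·η (in index notation, the electromagnetic energy-momentum tensor T_{ab} = F_{a}{}^{c}F_{bc} − (1/4)η_{ab}F_{cd}F^{cd}). Then T·η·T = (1/4)·tr((η·T)·(η·T))·η; in index notation, T_{a}{}^{c}T_{bc} − (1/4)η_{ab}T_{cd}T^{cd} = 0 (the algebraic Rainich identity for source-free electromagnetic fields in four dimensions). -/
import Mathlib


open Matrix

/-- The Minkowski metric `η = diag(-1,1,1,1)` on `ℝ⁴`. -/
noncomputable def minkowski : Matrix (Fin 4) (Fin 4) ℝ :=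
  Matrix.diagonal ![(-1 : ℝ), 1, 1, 1]

private lemma fmk0' (h : 0 < 4) : (⟨0, h⟩ : Fin 4) = 0 := rfl
private lemma fmk1' (h : 1 < 4) : (⟨1, h⟩ : Fin 4) = 1 := rfl
private lemma fmk2' (h : 2 < 4) : (⟨2, h⟩ : Fin 4) = 2 := rfl
private lemma fmk3' (h : 3 < 4) : (⟨3, h⟩ : Fin 4) = 3 := rfl

private lemma mul4' (A B : Matrix (Fin 4) (Fin 4) ℝ) (i j : Fin 4) :
    (A * B) i j = A i 0 * B 0 j + A i 1 * B 1 j + A i 2 * B 2 j + A i 3 * B 3 j := by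
  simp [Matrix.mul_apply, Fin.sum_univ_four]

private lemma tr4' (A : Matrix (Fin 4) (Fin 4) ℝ) :
    Matrix.trace A = A 0 0 + A 1 1 + A 2 2 + A 3 3 := by
  simp [Matrix.trace, Matrix.diag, Fin.sum_univ_four]

private lemma mink00 : minkowski 0 0 = (-1 : ℝ) := by simp [minkowski]
private lemma mink01 : minkowski 0 1 = (0 : ℝ) := by simp [minkowski]
private lemma mink02 : minkowski 0 2 = (0 : ℝ) := by simp [minkowski]
private lemma mink03 : minkowski 0 3 = (0 : ℝ) := by simp [minkowski]
private lemma mink10 : minkowski 1 0 = (0 : ℝ) := by simp [minkowski]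
private lemma mink11 : minkowski 1 1 = (1 : ℝ) := by simp [minkowski]
private lemma mink12 : minkowski 1 2 = (0 : ℝ) := by simp [minkowski]
private lemma mink13 : minkowski 1 3 = (0 : ℝ) := by simp [minkowski]
private lemma mink20 : minkowski 2 0 = (0 : ℝ) := by simp [minkowski]
private lemma mink21 : minkowski 2 1 = (0 : ℝ) := by simp [minkowski]
private lemma mink22 : minkowski 2 2 = (1 : ℝ) := by simp [minkowski]
private lemma mink23 : minkowski 2 3 = (0 : ℝ) := by simp [minkowski]
private lemma mink30 : minkowski 3 0 = (0 : ℝ) := by simp [minkowski]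
private lemma mink31 : minkowski 3 1 = (0 : ℝ) := by simp [minkowski]
private lemma mink32 : minkowski 3 2 = (0 : ℝ) := by simp [minkowski]
private lemma mink33 : minkowski 3 3 = (1 : ℝ) := by simp [minkowski]

set_option maxHeartbeats 1600000 in
/-- **Algebraic Rainich identity.** For an antisymmetric field strength `F`, the
electromagnetic energy-momentum tensor
`T_{ab} = F_{a}{}^{c} F_{bc} - (1/4) η_{ab} F_{cd} F^{cd}`, i.e.
`T = F·η·Fᵀ - (1/4) tr(η·F·η·Fᵀ) η`, satisfies
`T_{a}{}^{c} T_{bc} - (1/4) η_{ab} T_{cd} T^{cd} = 0`, i.e.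
`T·η·T = (1/4) tr((η·T)·(η·T)) η`. -/
theorem rainich_identity (F T : Matrix (Fin 4) (Fin 4) ℝ)
    (hF : Fᵀ = -F)
    (hT : T = F * minkowski * Fᵀ -
      ((1 / 4 : ℝ) * Matrix.trace (minkowski * F * minkowski * Fᵀ)) • minkowski) :
    T * minkowski * T =
      ((1 / 4 : ℝ) * Matrix.trace ((minkowski * T) * (minkowski * T))) • minkowski := by
  have hij : ∀ i j : Fin 4, F j i = - F i j := fun i j => by
    simpa using congrFun (congrFun hF i) j
  have h00 : F 0 0 = 0 := by have := hij 0 0; linarith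
  have h11 : F 1 1 = 0 := by have := hij 1 1; linarith
  have h22 : F 2 2 = 0 := by have := hij 2 2; linarith
  have h33 : F 3 3 = 0 := by have := hij 3 3; linarith
  have h10 : F 1 0 = -F 0 1 := hij 0 1
  have h20 : F 2 0 = -F 0 2 := hij 0 2
  have h30 : F 3 0 = -F 0 3 := hij 0 3
  have h21 : F 2 1 = -F 1 2 := hij 1 2
  have h31 : F 3 1 = -F 1 3 := hij 1 3
  have h32 : F 3 2 = -F 2 3 := hij 2 3
  have hT00 : T 0 0 = (1/2)*(F 2 3)*(F 2 3) + (1/2)*(F 1 3)*(F 1 3) + (1/2)*(F 1 2)*(F 1 2) + (1/2)*(F 0 3)*(F 0 3) + (1/2)*(F 0 2)*(F 0 2) + (1/2)*(F 0 1)*(F 0 1) := by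
    rw [hT, Matrix.sub_apply, Matrix.smul_apply]
    simp only [mul4', tr4', Matrix.transpose_apply, smul_eq_mul,
      mink00, mink01, mink02, mink03, mink10, mink11, mink12, mink13, mink20, mink21, mink22, mink23, mink30, mink31, mink32, mink33, h00, h11, h22, h33, h10, h20, h30, h21, h31, h32]
    ring
  have hT01 : T 0 1 = (F 0 3)*(F 1 3) + (F 0 2)*(F 1 2) := by
    rw [hT, Matrix.sub_apply, Matrix.smul_apply]
    simp only [mul4', tr4', Matrix.transpose_apply, smul_eq_mul,
      mink00, mink01, mink02, mink03, mink10, mink11, mink12, mink13, mink20, mink21, mink22, mink23, mink30, mink31, mink32, mink33, h00, h11, h22, h33, h10, h20, h30, h21, h31, h32]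
    ring
  have hT02 : T 0 2 = (F 0 3)*(F 2 3) - (F 0 1)*(F 1 2) := by
    rw [hT, Matrix.sub_apply, Matrix.smul_apply]
    simp only [mul4', tr4', Matrix.transpose_apply, smul_eq_mul,
      mink00, mink01, mink02, mink03, mink10, mink11, mink12, mink13, mink20, mink21, mink22, mink23, mink30, mink31, mink32, mink33, h00, h11, h22, h33, h10, h20, h30, h21, h31, h32]
    ring
  have hT03 : T 0 3 = -((F 0 2)*(F 2 3)) - (F 0 1)*(F 1 3) := by
    rw [hT, Matrix.sub_apply, Matrix.smul_apply]
    simp only [mul4', tr4', Matrix.transpose_apply, smul_eq_mul,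
      mink00, mink01, mink02, mink03, mink10, mink11, mink12, mink13, mink20, mink21, mink22, mink23, mink30, mink31, mink32, mink33, h00, h11, h22, h33, h10, h20, h30, h21, h31, h32]
    ring
  have hT10 : T 1 0 = (F 0 3)*(F 1 3) + (F 0 2)*(F 1 2) := by
    rw [hT, Matrix.sub_apply, Matrix.smul_apply]
    simp only [mul4', tr4', Matrix.transpose_apply, smul_eq_mul,
      mink00, mink01, mink02, mink03, mink10, mink11, mink12, mink13, mink20, mink21, mink22, mink23, mink30, mink31, mink32, mink33, h00, h11, h22, h33, h10, h20, h30, h21, h31, h32]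
    ring
  have hT11 : T 1 1 = (-1/2)*(F 2 3)*(F 2 3) + (1/2)*(F 1 3)*(F 1 3) + (1/2)*(F 1 2)*(F 1 2) + (1/2)*(F 0 3)*(F 0 3) + (1/2)*(F 0 2)*(F 0 2) + (-1/2)*(F 0 1)*(F 0 1) := by
    rw [hT, Matrix.sub_apply, Matrix.smul_apply]
    simp only [mul4', tr4', Matrix.transpose_apply, smul_eq_mul,
      mink00, mink01, mink02, mink03, mink10, mink11, mink12, mink13, mink20, mink21, mink22, mink23, mink30, mink31, mink32, mink33, h00, h11, h22, h33, h10, h20, h30, h21, h31, h32]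
    ring
  have hT12 : T 1 2 = (F 1 3)*(F 2 3) - (F 0 1)*(F 0 2) := by
    rw [hT, Matrix.sub_apply, Matrix.smul_apply]
    simp only [mul4', tr4', Matrix.transpose_apply, smul_eq_mul,
      mink00, mink01, mink02, mink03, mink10, mink11, mink12, mink13, mink20, mink21, mink22, mink23, mink30, mink31, mink32, mink33, h00, h11, h22, h33, h10, h20, h30, h21, h31, h32]
    ring
  have hT13 : T 1 3 = -((F 1 2)*(F 2 3)) - (F 0 1)*(F 0 3) := by
    rw [hT, Matrix.sub_apply, Matrix.smul_apply]
    simp only [mul4', tr4', Matrix.transpose_apply, smul_eq_mul,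
      mink00, mink01, mink02, mink03, mink10, mink11, mink12, mink13, mink20, mink21, mink22, mink23, mink30, mink31, mink32, mink33, h00, h11, h22, h33, h10, h20, h30, h21, h31, h32]
    ring
  have hT20 : T 2 0 = (F 0 3)*(F 2 3) - (F 0 1)*(F 1 2) := by
    rw [hT, Matrix.sub_apply, Matrix.smul_apply]
    simp only [mul4', tr4', Matrix.transpose_apply, smul_eq_mul,
      mink00, mink01, mink02, mink03, mink10, mink11, mink12, mink13, mink20, mink21, mink22, mink23, mink30, mink31, mink32, mink33, h00, h11, h22, h33, h10, h20, h30, h21, h31, h32]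
    ring
  have hT21 : T 2 1 = (F 1 3)*(F 2 3) - (F 0 1)*(F 0 2) := by
    rw [hT, Matrix.sub_apply, Matrix.smul_apply]
    simp only [mul4', tr4', Matrix.transpose_apply, smul_eq_mul,
      mink00, mink01, mink02, mink03, mink10, mink11, mink12, mink13, mink20, mink21, mink22, mink23, mink30, mink31, mink32, mink33, h00, h11, h22, h33, h10, h20, h30, h21, h31, h32]
    ring
  have hT22 : T 2 2 = (1/2)*(F 2 3)*(F 2 3) + (-1/2)*(F 1 3)*(F 1 3) + (1/2)*(F 1 2)*(F 1 2) + (1/2)*(F 0 3)*(F 0 3) + (-1/2)*(F 0 2)*(F 0 2) + (1/2)*(F 0 1)*(F 0 1) := by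
    rw [hT, Matrix.sub_apply, Matrix.smul_apply]
    simp only [mul4', tr4', Matrix.transpose_apply, smul_eq_mul,
      mink00, mink01, mink02, mink03, mink10, mink11, mink12, mink13, mink20, mink21, mink22, mink23, mink30, mink31, mink32, mink33, h00, h11, h22, h33, h10, h20, h30, h21, h31, h32]
    ring
  have hT23 : T 2 3 = (F 1 2)*(F 1 3) - (F 0 2)*(F 0 3) := by
    rw [hT, Matrix.sub_apply, Matrix.smul_apply]
    simp only [mul4', tr4', Matrix.transpose_apply, smul_eq_mul,
      mink00, mink01, mink02, mink03, mink10, mink11, mink12, mink13, mink20, mink21, mink22, mink23, mink30, mink31, mink32, mink33, h00, h11, h22, h33, h10, h20, h30, h21, h31, h32]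
    ring
  have hT30 : T 3 0 = -((F 0 2)*(F 2 3)) - (F 0 1)*(F 1 3) := by
    rw [hT, Matrix.sub_apply, Matrix.smul_apply]
    simp only [mul4', tr4', Matrix.transpose_apply, smul_eq_mul,
      mink00, mink01, mink02, mink03, mink10, mink11, mink12, mink13, mink20, mink21, mink22, mink23, mink30, mink31, mink32, mink33, h00, h11, h22, h33, h10, h20, h30, h21, h31, h32]
    ring
  have hT31 : T 3 1 = -((F 1 2)*(F 2 3)) - (F 0 1)*(F 0 3) := by
    rw [hT, Matrix.sub_apply, Matrix.smul_apply]
    simp only [mul4', tr4', Matrix.transpose_apply, smul_eq_mul,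
      mink00, mink01, mink02, mink03, mink10, mink11, mink12, mink13, mink20, mink21, mink22, mink23, mink30, mink31, mink32, mink33, h00, h11, h22, h33, h10, h20, h30, h21, h31, h32]
    ring
  have hT32 : T 3 2 = (F 1 2)*(F 1 3) - (F 0 2)*(F 0 3) := by
    rw [hT, Matrix.sub_apply, Matrix.smul_apply]
    simp only [mul4', tr4', Matrix.transpose_apply, smul_eq_mul,
      mink00, mink01, mink02, mink03, mink10, mink11, mink12, mink13, mink20, mink21, mink22, mink23, mink30, mink31, mink32, mink33, h00, h11, h22, h33, h10, h20, h30, h21, h31, h32]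
    ring
  have hT33 : T 3 3 = (1/2)*(F 2 3)*(F 2 3) + (1/2)*(F 1 3)*(F 1 3) + (-1/2)*(F 1 2)*(F 1 2) + (-1/2)*(F 0 3)*(F 0 3) + (1/2)*(F 0 2)*(F 0 2) + (1/2)*(F 0 1)*(F 0 1) := by
    rw [hT, Matrix.sub_apply, Matrix.smul_apply]
    simp only [mul4', tr4', Matrix.transpose_apply, smul_eq_mul,
      mink00, mink01, mink02, mink03, mink10, mink11, mink12, mink13, mink20, mink21, mink22, mink23, mink30, mink31, mink32, mink33, h00, h11, h22, h33, h10, h20, h30, h21, h31, h32]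
    ring
  ext i j
  fin_cases i <;> fin_cases j <;>
    simp only [fmk0', fmk1', fmk2', fmk3', mul4', tr4', Matrix.smul_apply, smul_eq_mul,
      mink00, mink01, mink02, mink03, mink10, mink11, mink12, mink13, mink20, mink21, mink22, mink23, mink30, mink31, mink32, mink33, hT00, hT01, hT02, hT03, hT10, hT11, hT12, hT13, hT20, hT21, hT22, hT23, hT30, hT31, hT32, hT33] <;>
    ring
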